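/- Let b₁,...,bₙ ∈ ℝ^m be an LLL-reduced basis of the lattice L, let 1 ≤ k ≤ j ≤ n, and let d₁,...,d_j be arbitrary linearly independent vectors in L. Then det L(b₁,...,b_k) ≤ 2^{k(n−j)/2 + k(j−k)/4} · (det L(d₁,...,d_j))^{k/j}. -/

import Mathlib

open scoped BigOperators RealInnerProductSpace

/-- The Gram–Schmidt orthogonalization `b₁*, …, bₙ*` of the vectors `b₁, …, bₙ`:
`bᵢ* = bᵢ - ∑_{j<i} μᵢⱼ bⱼ*`. -/
noncomputable def gso {m n : ℕ} (b : Fin n → EuclideanSpace ℝ (Fin m)) :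
    Fin n → EuclideanSpace ℝ (Fin m) :=
  haveI : WellFoundedLT (Fin n) := inferInstance
  InnerProductSpace.gramSchmidt ℝ b

/-- The Gram–Schmidt coefficient `μᵢⱼ = ⟨bᵢ, bⱼ*⟩ / ⟨bⱼ*, bⱼ*⟩`. -/
noncomputable def mu {m n : ℕ} (b : Fin n → EuclideanSpace ℝ (Fin m)) (i j : Fin n) : ℝ :=
  ⟪b i, gso b j⟫ / ⟪gso b j, gso b j⟫

/-- `b₁, …, bₙ` is LLL-reduced: `|μⱼᵢ| ≤ 1/2` for `i < j`, and the exchange condition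
`‖bⱼ* + μ_{j,j-1} b_{j-1}*‖² ≥ (3/4) ‖b_{j-1}*‖²` for consecutive indices `i + 1 = j`. -/
def LLLReduced {m n : ℕ} (b : Fin n → EuclideanSpace ℝ (Fin m)) : Prop :=
  (∀ i j : Fin n, i < j → |mu b j i| ≤ 1 / 2) ∧
  (∀ i j : Fin n, (i : ℕ) + 1 = (j : ℕ) →
    (3 / 4 : ℝ) * ‖gso b i‖ ^ 2 ≤ ‖gso b j + mu b j i • gso b i‖ ^ 2)

/-- Membership in the lattice generated by `b₁, …, bₙ`: an integer linear combination. -/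
def inLattice {m n : ℕ} (b : Fin n → EuclideanSpace ℝ (Fin m))
    (x : EuclideanSpace ℝ (Fin m)) : Prop :=
  ∃ c : Fin n → ℤ, x = ∑ i, (c i : ℝ) • b i

/-- The determinant of the lattice generated by `d₁, …, d_k`:
`√(det DᵀD)`, i.e. the square root of the Gram determinant. -/
noncomputable def latticeDet {m k : ℕ} (d : Fin k → EuclideanSpace ℝ (Fin m)) : ℝ :=
  Real.sqrt (Matrix.det (Matrix.of fun i j => ⟪d i, d j⟫))

/-!
Write `βᵢ = ‖bᵢ*‖²`. A Gram determinant is the product of the squared Gram–Schmidt norms, so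
`det L(b₁, …, b_k)² = ∏_{i<k} βᵢ`. The LLL conditions give `βᵢ ≤ 2 βᵢ₊₁`, i.e. `2ⁱ βᵢ` is
nondecreasing, and comparing the geometric means of this sequence over its first `k` and first `j`
terms gives `(∏_{i<k} βᵢ)^j ≤ 2^{kj(j-k)/2} (∏_{i<j} βᵢ)^k`.

For the sublattice, put the ℤ-module of coefficient vectors of `L(d₁, …, d_j)` in echelon form:
generators `g₁, …, g_j` of a lattice containing every `dᵢ`, where the last nonzero coefficient of
`g_l` sits at index `t_l` and `t₁ < ⋯ < t_j`. Then `det Gram(d) ≥ det Gram(g) = ∏ ‖g_l*‖²`, and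
since the pivot coefficient is a nonzero integer, `‖g_l*‖ ≥ ‖b_{t_l}*‖`. As `l ≤ t_l ≤ l + n - j`,
this gives `∏_{i<j} βᵢ ≤ 2^{(n-j)j} det Gram(d)`.
-/

open Finset Matrix InnerProductSpace

theorem gramSchmidt_comp_castLE {𝕜 E : Type*} [RCLike 𝕜] [NormedAddCommGroup E]
    [InnerProductSpace 𝕜 E] {k n : ℕ} (h : k ≤ n) (f : Fin n → E) (i : Fin k) :
    gramSchmidt 𝕜 (f ∘ Fin.castLE h) i = gramSchmidt 𝕜 f (i.castLE h) := by
  induction i using WellFoundedLT.induction with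
  | _ i ih =>
    rw [gramSchmidt_def, gramSchmidt_def, Fin.sum_Iio_castLE]
    exact congrArg _ (sum_congr rfl fun l hl => by rw [ih l (mem_Iio.mp hl)]; rfl)

section GramSchmidt

variable {E : Type*} [NormedAddCommGroup E] [InnerProductSpace ℝ E]

theorem Matrix.gram_sum_smul {ι κ : Type*} [Fintype κ] (A : Matrix ι κ ℝ) (v : κ → E) :
    gram ℝ (fun i => ∑ l, A i l • v l) = A * gram ℝ v * Aᵀ := by
  ext i i'
  simp only [gram_apply, sum_inner, inner_sum, real_inner_smul_left, real_inner_smul_right,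
    mul_apply, transpose_apply, Finset.sum_mul]
  exact sum_congr rfl fun _ _ => sum_congr rfl fun _ _ => by ring

theorem Matrix.det_gram_sum_smul {ι : Type*} [Fintype ι] [DecidableEq ι] (A : Matrix ι ι ℝ)
    (v : ι → E) : (gram ℝ (fun i => ∑ l, A i l • v l)).det = A.det ^ 2 * (gram ℝ v).det := by
  rw [gram_sum_smul, det_mul, det_mul, det_transpose]
  ring

variable {ι : Type*} [LinearOrder ι] [LocallyFiniteOrderBot ι] [WellFoundedLT ι]

theorem gram_gramSchmidt [DecidableEq ι] (f : ι → E) :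
    gram ℝ (gramSchmidt ℝ f) = diagonal fun i => ‖gramSchmidt ℝ f i‖ ^ 2 := by
  ext i i'
  rcases eq_or_ne i i' with rfl | h
  · simp
  · simp [gramSchmidt_orthogonal ℝ f h, h]

theorem inner_gramSchmidt_eq_of_forall_lt (f : ι → E) {i : ι} {v : E}
    (hv : ∀ j < i, ⟪f j, v⟫ = 0) : ⟪gramSchmidt ℝ f i, v⟫ = ⟪f i, v⟫ := by
  have hspan : Submodule.span ℝ (f '' Set.Iio i) ≤ (ℝ ∙ v)ᗮ := by
    rw [Submodule.span_le]
    rintro - ⟨j, hj, rfl⟩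
    exact Submodule.mem_orthogonal_singleton_iff_inner_left.mpr (hv j hj)
  have hproj : ∑ j ∈ Iio i, (ℝ ∙ gramSchmidt ℝ f j).starProjection (f i) ∈ (ℝ ∙ v)ᗮ := by
    refine Submodule.sum_mem _ fun j hj => hspan ?_
    rw [← span_gramSchmidt_Iio ℝ f i]
    refine Submodule.span_singleton_le_iff_mem _ _ |>.mpr ?_ (Submodule.coe_mem _)
    exact Submodule.subset_span ⟨j, mem_Iio.mp hj, rfl⟩
  rw [gramSchmidt_def ℝ f i, inner_sub_left,
    Submodule.mem_orthogonal_singleton_iff_inner_left.mp hproj, sub_zero]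

theorem inner_apply_gramSchmidt_self (f : ι → E) (i : ι) :
    ⟪f i, gramSchmidt ℝ f i⟫ = ‖gramSchmidt ℝ f i‖ ^ 2 := by
  rw [← inner_gramSchmidt_eq_of_forall_lt f fun j hj => ?_, real_inner_self_eq_norm_sq]
  rw [real_inner_comm]
  exact gramSchmidt_inv_triangular ℝ f hj

theorem inner_sum_smul_gramSchmidt [Fintype ι] (f : ι → E) (c : ι → ℝ) {i : ι}
    (hc : ∀ s, i < s → c s = 0) :
    ⟪∑ s, c s • f s, gramSchmidt ℝ f i⟫ = c i * ‖gramSchmidt ℝ f i‖ ^ 2 := by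
  rw [sum_inner, sum_eq_single i, real_inner_smul_left, inner_apply_gramSchmidt_self]
  · intro s _ hs
    rcases hs.lt_or_gt with hs | hs
    · rw [real_inner_smul_left, real_inner_comm, gramSchmidt_inv_triangular ℝ f hs, mul_zero]
    · rw [hc s hs, zero_smul, inner_zero_left]
  · simp

theorem det_gram_eq_prod_norm_gramSchmidt_sq [Fintype ι] [DecidableEq ι] (f : ι → E) :
    (gram ℝ f).det = ∏ i, ‖gramSchmidt ℝ f i‖ ^ 2 := by
  set T : Matrix ι ι ℝ := of fun i l =>
    if l < i then ⟪gramSchmidt ℝ f l, f i⟫ / ‖gramSchmidt ℝ f l‖ ^ 2 else if i = l then 1 else 0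
  have hT : T.IsLowerTriangular := fun i l (h : i < l) => by
    simp [T, h.not_gt, h.ne]
  have hf : f = fun i => ∑ l, T i l • gramSchmidt ℝ f l := by
    ext1 i
    have hTi : ∀ l, T i l • gramSchmidt ℝ f l =
        (if l < i then (⟪gramSchmidt ℝ f l, f i⟫ / ‖gramSchmidt ℝ f l‖ ^ 2) • gramSchmidt ℝ f l
          else 0) + if i = l then gramSchmidt ℝ f l else 0 := fun l => by
      simp only [T, of_apply]
      split_ifs with h₁ h₂ <;> simp_all
    rw [sum_congr rfl fun l _ => hTi l, sum_add_distrib, ← sum_filter, filter_gt_eq_Iio,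
      sum_ite_eq, if_pos (mem_univ _), add_comm]
    exact gramSchmidt_def'' ℝ f i
  rw [congrArg (gram ℝ) hf, det_gram_sum_smul, gram_gramSchmidt, det_diagonal,
    det_of_isLowerTriangular T hT]
  simp [T]

end GramSchmidt

section Echelon

structure IsEchelon {R : Type*} [Zero R] {r n : ℕ} (w : Fin r → Fin n → R) (t : Fin r → Fin n) :
    Prop where
  strictMono : StrictMono t
  pivot_ne_zero : ∀ l, w l (t l) ≠ 0
  apply_eq_zero_of_lt : ∀ l s, t l < s → w l s = 0

namespace IsEchelon

variable {R : Type*} {r n : ℕ} {w : Fin r → Fin n → R} {t : Fin r → Fin n}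

theorem snoc [Zero R] (h : IsEchelon w t) {v : Fin n → R} {q : Fin n} (ht : ∀ l, t l < q)
    (hvq : v q ≠ 0) (hv : ∀ s, q < s → v s = 0) :
    IsEchelon (Fin.snoc w v : Fin (r + 1) → Fin n → R) (Fin.snoc t q : Fin (r + 1) → Fin n) where
  strictMono := by
    intro a c hac
    induction c using Fin.lastCases with
    | last =>
      obtain ⟨a, rfl⟩ := Fin.exists_castSucc_eq.mpr hac.ne
      simpa using ht a
    | cast c =>
      obtain ⟨a, rfl⟩ := Fin.exists_castSucc_eq.mpr (hac.trans (Fin.castSucc_lt_last c)).ne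
      simpa using h.strictMono (Fin.castSucc_lt_castSucc_iff.mp hac)
  pivot_ne_zero l := by
    induction l using Fin.lastCases with
    | last => simpa using hvq
    | cast l => simpa using h.pivot_ne_zero l
  apply_eq_zero_of_lt l s := by
    induction l using Fin.lastCases with
    | last => simpa using hv s
    | cast l => simpa using h.apply_eq_zero_of_lt l s

theorem linearIndependent [Ring R] [NoZeroDivisors R] (h : IsEchelon w t) :
    LinearIndependent R w := by
  rw [Fintype.linearIndependent_iff]
  intro x hx l
  induction l using WellFoundedGT.induction with
  | _ l ih =>
    have hl := congrFun hx (t l)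
    simp only [Finset.sum_apply, Pi.smul_apply, smul_eq_mul, Pi.zero_apply] at hl
    rw [sum_eq_single l (fun l' _ hl' => ?_) (by simp)] at hl
    · exact (mul_eq_zero.mp hl).resolve_right (h.pivot_ne_zero l)
    · rcases hl'.lt_or_gt with hl' | hl'
      · rw [h.apply_eq_zero_of_lt l' (t l) (h.strictMono hl'), mul_zero]
      · rw [ih l' hl', zero_mul]

theorem map [Zero R] {S : Type*} [Zero S] (h : IsEchelon w t) (φ : R → S) (hφ0 : φ 0 = 0)
    (hφ : Function.Injective φ) : IsEchelon (fun l s => φ (w l s)) t where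
  strictMono := h.strictMono
  pivot_ne_zero l := by
    rw [← hφ0]; exact hφ.ne (h.pivot_ne_zero l)
  apply_eq_zero_of_lt l s hs := by rw [h.apply_eq_zero_of_lt l s hs, hφ0]

end IsEchelon

theorem Submodule.eq_span_singleton_sup_inf_ker {R M : Type*} [CommRing R] [AddCommGroup M]
    [Module R M] {N : Submodule R M} (π : M →ₗ[R] R) {v : M} (hv : v ∈ N)
    (hπ : N.map π = R ∙ π v) : N = R ∙ v ⊔ N ⊓ LinearMap.ker π := by
  refine le_antisymm (fun x hx => ?_) (sup_le ((span_singleton_le_iff_mem v N).mpr hv) inf_le_left)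
  obtain ⟨a, ha⟩ := mem_span_singleton.mp (hπ ▸ mem_map_of_mem hx : π x ∈ R ∙ π v)
  refine mem_sup.mpr ⟨a • v, mem_span_singleton.mpr ⟨a, rfl⟩, x - a • v, ⟨?_, ?_⟩, by abel⟩
  · exact N.sub_mem hx (N.smul_mem a hv)
  · exact LinearMap.mem_ker.mpr (by rw [map_sub, map_smul, ha, sub_self])

variable {R : Type*} [CommRing R] [IsPrincipalIdealRing R]

theorem exists_isEchelon_span_eq_of_apply_eq_zero {n : ℕ} :
    ∀ p ≤ n, ∀ N : Submodule R (Fin n → R), (∀ x ∈ N, ∀ s : Fin n, p ≤ (s : ℕ) → x s = 0) →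
      ∃ (r : ℕ) (w : Fin r → Fin n → R) (t : Fin r → Fin n),
        IsEchelon w t ∧ (∀ l, (t l : ℕ) < p) ∧ Submodule.span R (Set.range w) = N := by
  intro p
  induction p with
  | zero =>
    intro _ N hN
    refine ⟨0, Fin.elim0, Fin.elim0, ⟨fun a => a.elim0, fun l => l.elim0, fun l => l.elim0⟩,
      fun l => l.elim0, ?_⟩
    rw [Set.range_eq_empty, Submodule.span_empty, eq_comm, Submodule.eq_bot_iff]
    exact fun x hx => funext fun s => hN x hx s (Nat.zero_le _)
  | succ p ih =>
    intro hpn N hN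
    set q : Fin n := ⟨p, hpn⟩
    set π : (Fin n → R) →ₗ[R] R := LinearMap.proj q
    have hN₀ : ∀ x ∈ N ⊓ LinearMap.ker π, ∀ s : Fin n, p ≤ (s : ℕ) → x s = 0 := by
      intro x hx s hs
      rcases hs.eq_or_lt with hs | hs
      · exact (Fin.ext hs : q = s) ▸ hx.2
      · exact hN x hx.1 s hs
    obtain ⟨r, w, t, hwt, htp, hspan⟩ := ih (Nat.le_of_succ_le hpn) _ hN₀
    obtain ⟨v, hvN, hvg⟩ :=
      Submodule.mem_map.mp (Submodule.IsPrincipal.generator_mem (N.map π))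
    have hN_eq := Submodule.eq_span_singleton_sup_inf_ker π hvN
      (by rw [hvg, Submodule.IsPrincipal.span_singleton_generator])
    by_cases hvq : v q = 0
    · refine ⟨r, w, t, hwt, fun l => (htp l).trans p.lt_succ_self, ?_⟩
      have hv : R ∙ v ≤ N ⊓ LinearMap.ker π :=
        (Submodule.span_singleton_le_iff_mem _ _).mpr ⟨hvN, hvq⟩
      rw [hspan, ← sup_eq_right.mpr hv, ← hN_eq]
    · refine ⟨r + 1, Fin.snoc w v, Fin.snoc t q, hwt.snoc htp hvq fun s hs => hN v hvN s hs,
        fun l => ?_, ?_⟩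
      · induction l using Fin.lastCases with
        | last => simp [q]
        | cast l => simpa using (htp l).trans p.lt_succ_self
      · rw [Fin.range_snoc, Submodule.span_insert, hspan, ← hN_eq]

theorem Submodule.exists_isEchelon_span_eq {n : ℕ} (N : Submodule R (Fin n → R)) :
    ∃ (r : ℕ) (w : Fin r → Fin n → R) (t : Fin r → Fin n),
      IsEchelon w t ∧ Submodule.span R (Set.range w) = N := by
  obtain ⟨r, w, t, hwt, -, hspan⟩ := exists_isEchelon_span_eq_of_apply_eq_zero n le_rfl N
    fun _ _ s hs => absurd s.2 (not_lt.mpr hs)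
  exact ⟨r, w, t, hwt, hspan⟩

end Echelon

section Sublattice

variable {E : Type*} [NormedAddCommGroup E] [InnerProductSpace ℝ E]

theorem det_gram_le_det_gram_of_forall_mem_span_int {r : ℕ} {d g : Fin r → E}
    (hd : LinearIndependent ℝ d) (hdg : ∀ i, d i ∈ Submodule.span ℤ (Set.range g)) :
    (gram ℝ g).det ≤ (gram ℝ d).det := by
  choose A hA using fun i => (Submodule.mem_span_range_iff_exists_fun ℤ).mp (hdg i)
  have hd_eq : d = fun i => ∑ l, ((of A).map (Int.cast : ℤ → ℝ)) i l • g l := by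
    ext1 i
    simp only [map_apply, of_apply, Int.cast_smul_eq_zsmul, hA]
  have hdet : ((of A).map (Int.cast : ℤ → ℝ)).det = ((of A).det : ℝ) :=
    ((Int.castRingHom ℝ).map_det (of A)).symm
  have hpos : 0 < (gram ℝ d).det := (posDef_gram_of_linearIndependent hd).det_pos
  rw [hd_eq, det_gram_sum_smul, hdet] at hpos ⊢
  have hA_ne : (of A).det ≠ 0 := by
    rintro h
    simp [h] at hpos
  have h1 : (1 : ℝ) ≤ ((of A).det : ℝ) ^ 2 := by
    exact_mod_cast (one_le_sq_iff_one_le_abs _).mpr (Int.one_le_abs hA_ne)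
  exact le_mul_of_one_le_left (posSemidef_gram ℝ g).det_nonneg h1

theorem IsEchelon.norm_gramSchmidt_le {n r : ℕ} (b : Fin n → E) {w : Fin r → Fin n → ℤ}
    {t : Fin r → Fin n} (h : IsEchelon w t) (l : Fin r) :
    ‖gramSchmidt ℝ b (t l)‖ ≤ ‖gramSchmidt ℝ (fun l => ∑ s, (w l s : ℝ) • b s) l‖ := by
  set g : Fin r → E := fun l => ∑ s, (w l s : ℝ) • b s
  set e := gramSchmidt ℝ b (t l)
  have hinner : ⟪gramSchmidt ℝ g l, e⟫ = w l (t l) * ‖e‖ ^ 2 := by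
    rw [inner_gramSchmidt_eq_of_forall_lt g fun l' hl' => ?_,
      inner_sum_smul_gramSchmidt b _ fun s hs => by simp [h.apply_eq_zero_of_lt l s hs]]
    have ht : t l' < t l := h.strictMono hl'
    rw [inner_sum_smul_gramSchmidt b _ fun s hs => by
        simp [h.apply_eq_zero_of_lt l' s (ht.trans hs)],
      h.apply_eq_zero_of_lt l' (t l) ht, Int.cast_zero, zero_mul]
  have hw : (1 : ℝ) ≤ |(w l (t l) : ℝ)| := by exact_mod_cast Int.one_le_abs (h.pivot_ne_zero l)
  rcases (norm_nonneg e).eq_or_lt with he | he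
  · rw [← he]; exact norm_nonneg _
  refine le_of_mul_le_mul_right ?_ he
  calc ‖e‖ * ‖e‖ ≤ |(w l (t l) : ℝ)| * ‖e‖ ^ 2 := by nlinarith
    _ = |⟪gramSchmidt ℝ g l, e⟫| := by rw [hinner, abs_mul, abs_of_nonneg (sq_nonneg ‖e‖)]
    _ ≤ ‖gramSchmidt ℝ g l‖ * ‖e‖ := abs_real_inner_le_norm _ _

theorem exists_strictMono_prod_norm_gramSchmidt_sq_le_det_gram {n j : ℕ} {b : Fin n → E}
    (hb : LinearIndependent ℝ b) {d : Fin j → E} (hd : LinearIndependent ℝ d)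
    (hdL : ∀ i, d i ∈ Submodule.span ℤ (Set.range b)) :
    ∃ t : Fin j → Fin n, StrictMono t ∧ ∏ l, ‖gramSchmidt ℝ b (t l)‖ ^ 2 ≤ (gram ℝ d).det := by
  set L := Fintype.linearCombination ℤ b
  obtain ⟨r, w, t, hwt, hspan⟩ :=
    Submodule.exists_isEchelon_span_eq ((Submodule.span ℤ (Set.range d)).comap L)
  set g : Fin r → E := fun l => ∑ s, (w l s : ℝ) • b s
  have hg : g = L ∘ w := by
    ext1 l
    simp [g, L, Fintype.linearCombination_apply, Int.cast_smul_eq_zsmul]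
  have hdg : ∀ i, d i ∈ Submodule.span ℤ (Set.range g) := by
    intro i
    obtain ⟨c, hc⟩ : d i ∈ LinearMap.range L := by
      rw [Fintype.range_linearCombination]; exact hdL i
    have hc' : c ∈ Submodule.span ℤ (Set.range w) :=
      hspan ▸ Submodule.mem_comap.mpr (hc ▸ Submodule.subset_span (Set.mem_range_self i))
    rw [hg, Set.range_comp, ← Submodule.map_span, ← hc]
    exact Submodule.mem_map_of_mem hc'
  have hgd : ∀ l, g l ∈ Submodule.span ℤ (Set.range d) := by
    intro l
    rw [hg]
    exact Submodule.mem_comap.mp (hspan ▸ Submodule.subset_span (Set.mem_range_self l))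
  have hg_li : LinearIndependent ℝ g :=
    (hwt.map (Int.cast : ℤ → ℝ) Int.cast_zero Int.cast_injective).linearIndependent.map'
      (Fintype.linearCombination ℝ b) (LinearMap.ker_eq_bot.mpr
        (linearIndependent_iff_injective_fintypeLinearCombination.mp hb))
  have hspan_eq : Submodule.span ℝ (Set.range g) = Submodule.span ℝ (Set.range d) := by
    apply le_antisymm <;> rw [Submodule.span_le] <;> rintro - ⟨i, rfl⟩
    · exact Submodule.span_le_restrictScalars ℤ ℝ _ (hgd i)
    · exact Submodule.span_le_restrictScalars ℤ ℝ _ (hdg i)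
  obtain rfl : r = j := by
    simpa [finrank_span_eq_card hg_li, finrank_span_eq_card hd] using
      congrArg (fun V : Submodule ℝ E => Module.finrank ℝ V) hspan_eq
  refine ⟨t, hwt.strictMono, ?_⟩
  calc ∏ l, ‖gramSchmidt ℝ b (t l)‖ ^ 2 ≤ ∏ l, ‖gramSchmidt ℝ g l‖ ^ 2 :=
        prod_le_prod (fun _ _ => sq_nonneg _) fun l _ =>
          pow_le_pow_left₀ (norm_nonneg _) (hwt.norm_gramSchmidt_le b l) 2
    _ = (gram ℝ g).det := (det_gram_eq_prod_norm_gramSchmidt_sq g).symm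
    _ ≤ (gram ℝ d).det := det_gram_le_det_gram_of_forall_mem_span_int hd hdg

end Sublattice

theorem Fin.val_apply_mem_Icc_of_strictMono {j n : ℕ} {t : Fin j → Fin n} (ht : StrictMono t)
    (l : Fin j) : (t l : ℕ) ∈ Set.Icc (l : ℕ) (l + (n - j)) := by
  have hIic : #(Iic l) ≤ #(Iic (t l)) :=
    card_le_card_of_injOn t (fun x hx => by simpa using ht.monotone (mem_Iic.mp hx))
      ht.injective.injOn
  have hIci : #(Ici l) ≤ #(Ici (t l)) :=
    card_le_card_of_injOn t (fun x hx => by simpa using ht.monotone (mem_Ici.mp hx))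
      ht.injective.injOn
  simp only [Fin.card_Iic, Fin.card_Ici] at hIic hIci
  exact ⟨by omega, by omega⟩


section ProductInequalities

theorem prod_range_pow_le_prod_range_pow {γ : ℕ → ℝ} {k j : ℕ} (hγ : ∀ i, 0 ≤ γ i)
    (hmono : MonotoneOn γ (Set.Iio j)) (hkj : k ≤ j) :
    (∏ i ∈ range k, γ i) ^ j ≤ (∏ i ∈ range j, γ i) ^ k := by
  induction j, hkj using Nat.le_induction with
  | base => rfl
  | succ j hkj ih =>
    have hprefix : ∏ i ∈ range k, γ i ≤ γ j ^ k := by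
      refine (prod_le_prod (fun i _ => hγ i) fun i hi => ?_).trans_eq
        (by rw [prod_const, card_range] : ∏ _i ∈ range k, γ j = γ j ^ k)
      have hik := mem_range.mp hi
      exact hmono (Set.mem_Iio.mpr (by omega)) (Set.mem_Iio.mpr j.lt_succ_self) (by omega)
    rw [pow_succ, prod_range_succ, mul_pow]
    exact mul_le_mul (ih (hmono.mono (Set.Iio_subset_Iio j.le_succ))) hprefix
      (prod_nonneg fun i _ => hγ i) (pow_nonneg (prod_nonneg fun i _ => hγ i) k)

theorem prod_range_pow_le_two_rpow_mul {β : ℕ → ℝ} {k j : ℕ} (hβ : ∀ i, 0 ≤ β i)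
    (hmono : MonotoneOn (fun i => 2 ^ i * β i) (Set.Iio j)) (hkj : k ≤ j) :
    (∏ i ∈ range k, β i) ^ j ≤
      (2 : ℝ) ^ ((k : ℝ) * j * (j - k) / 2) * (∏ i ∈ range j, β i) ^ k := by
  have h := prod_range_pow_le_prod_range_pow (fun i => mul_nonneg (by positivity) (hβ i)) hmono hkj
  simp only [prod_mul_distrib, mul_pow] at h
  rw [prod_pow_eq_pow_sum, prod_pow_eq_pow_sum, ← pow_mul, ← pow_mul] at h
  rw [← Real.rpow_natCast, ← Real.rpow_natCast (2 : ℝ) (_ * k)] at h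
  have hgauss (q : ℕ) : ((∑ i ∈ range q, i : ℕ) : ℝ) = q * (q - 1) / 2 := by
    induction q with
    | zero => simp
    | succ q ih => rw [sum_range_succ, Nat.cast_add, ih]; push_cast; ring
  have hexp : (((∑ i ∈ range j, i) * k : ℕ) : ℝ) =
      (((∑ i ∈ range k, i) * j : ℕ) : ℝ) + k * j * (j - k) / 2 := by
    rw [Nat.cast_mul, Nat.cast_mul, hgauss, hgauss]; ring
  rw [hexp, Real.rpow_add two_pos, mul_assoc] at h
  exact le_of_mul_le_mul_left h (by positivity)

theorem prod_range_le_two_pow_mul_prod_of_strictMono {β : ℕ → ℝ} {n j : ℕ} (hβ : ∀ i, 0 ≤ β i)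
    (hmono : MonotoneOn (fun i => 2 ^ i * β i) (Set.Iio n)) {t : Fin j → Fin n}
    (ht : StrictMono t) : ∏ i ∈ range j, β i ≤ 2 ^ ((n - j) * j) * ∏ l, β (t l) := by
  calc ∏ i ∈ range j, β i = ∏ l : Fin j, β l := (Fin.prod_univ_eq_prod_range _ _).symm
    _ ≤ ∏ l, 2 ^ (n - j) * β (t l) := prod_le_prod (fun l _ => hβ l) fun l _ => ?_
    _ = 2 ^ ((n - j) * j) * ∏ l, β (t l) := by
      rw [prod_mul_distrib, prod_const, card_univ, Fintype.card_fin, ← pow_mul]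
  obtain ⟨hl, htl⟩ := Fin.val_apply_mem_Icc_of_strictMono ht l
  have h := hmono (Set.mem_Iio.mpr (hl.trans_lt (t l).2)) (Set.mem_Iio.mpr (t l).2) hl
  have h2 : (2 : ℝ) ^ (t l : ℕ) * β (t l) ≤ 2 ^ (l : ℕ) * (2 ^ (n - j) * β (t l)) := by
    rw [← mul_assoc, ← pow_add]
    exact mul_le_mul_of_nonneg_right (pow_le_pow_right₀ one_le_two htl) (hβ _)
  exact le_of_mul_le_mul_left (h.trans h2) (by positivity)

theorem sqrt_le_two_rpow_mul_sqrt_rpow_of_pow_le {P X e : ℝ} {k j : ℕ} (hP : 0 ≤ P) (hX : 0 ≤ X)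
    (hj : j ≠ 0) (h : P ^ j ≤ 2 ^ e * X ^ k) :
    √P ≤ 2 ^ (e / (2 * j)) * √X ^ ((k : ℝ) / j) := by
  have hj' : (0 : ℝ) < j := by positivity
  have h' := Real.rpow_le_rpow (pow_nonneg hP j) h (by positivity : (0 : ℝ) ≤ 1 / (2 * j))
  rw [Real.mul_rpow (by positivity) (by positivity), ← Real.rpow_natCast, ← Real.rpow_natCast X,
    ← Real.rpow_mul hP, ← Real.rpow_mul two_pos.le, ← Real.rpow_mul hX] at h'
  rw [Real.sqrt_eq_rpow, Real.sqrt_eq_rpow, ← Real.rpow_mul hX]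
  convert h' using 3 <;> field_simp

end ProductInequalities

section Lattice

variable {m n : ℕ}

theorem gso_eq_gramSchmidt (b : Fin n → EuclideanSpace ℝ (Fin m)) :
    gso b = gramSchmidt ℝ b :=
  rfl

theorem gso_comp_castLE {k : ℕ} (h : k ≤ n) (b : Fin n → EuclideanSpace ℝ (Fin m)) (i : Fin k) :
    gso (fun i => b (i.castLE h)) i = gso b (i.castLE h) :=
  gramSchmidt_comp_castLE h b i

theorem latticeDet_eq_sqrt_prod_norm_gso_sq (d : Fin n → EuclideanSpace ℝ (Fin m)) :
    latticeDet d = √(∏ i, ‖gso d i‖ ^ 2) :=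
  congrArg Real.sqrt (det_gram_eq_prod_norm_gramSchmidt_sq d)

theorem inLattice_iff_mem_span (b : Fin n → EuclideanSpace ℝ (Fin m))
    (x : EuclideanSpace ℝ (Fin m)) : inLattice b x ↔ x ∈ Submodule.span ℤ (Set.range b) := by
  simp only [inLattice, Submodule.mem_span_range_iff_exists_fun, Int.cast_smul_eq_zsmul, eq_comm]

end Lattice

section LLL

variable {m n : ℕ} {b : Fin n → EuclideanSpace ℝ (Fin m)}

theorem LLLReduced.norm_gso_sq_le_two_mul (hred : LLLReduced b) {i l : Fin n}
    (h : (i : ℕ) + 1 = l) : ‖gso b i‖ ^ 2 ≤ 2 * ‖gso b l‖ ^ 2 := by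
  have hil : i < l := Fin.lt_def.mpr (by omega)
  have hlovasz := hred.2 i l h
  have hsize : mu b l i ^ 2 ≤ 1 / 4 := by
    have := hred.1 i l hil
    nlinarith [abs_nonneg (mu b l i), sq_abs (mu b l i)]
  rw [gso_eq_gramSchmidt] at hlovasz ⊢
  rw [norm_add_sq_real, real_inner_smul_right, gramSchmidt_orthogonal ℝ b hil.ne', norm_smul,
    Real.norm_eq_abs, mul_pow, sq_abs] at hlovasz
  nlinarith [mul_le_mul_of_nonneg_right hsize (sq_nonneg ‖gramSchmidt ℝ b i‖)]

theorem LLLReduced.monotone_two_pow_mul_norm_gso_sq (hred : LLLReduced b) :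
    Monotone fun i : Fin n => 2 ^ (i : ℕ) * ‖gso b i‖ ^ 2 := by
  rcases n with _ | n
  · exact fun i => i.elim0
  rw [Fin.monotone_iff_le_succ]
  intro i
  have := hred.norm_gso_sq_le_two_mul (i := i.castSucc) (l := i.succ) (by simp)
  simp only [Fin.val_castSucc, Fin.val_succ, pow_succ]
  nlinarith [pow_pos (two_pos : (0 : ℝ) < 2) (i : ℕ)]

theorem LLLReduced.prod_norm_gso_sq_pow_le (hred : LLLReduced b) {k j : ℕ} (hkj : k ≤ j)
    (hjn : j ≤ n) {t : Fin j → Fin n} (ht : StrictMono t) :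
    (∏ i : Fin k, ‖gso b (i.castLE (hkj.trans hjn))‖ ^ 2) ^ j ≤
      2 ^ ((k : ℝ) * j * (j - k) / 2 + (n - j) * j * k) * (∏ l, ‖gso b (t l)‖ ^ 2) ^ k := by
  set β : ℕ → ℝ := fun s => if h : s < n then ‖gso b ⟨s, h⟩‖ ^ 2 else 0
  have hβ (i : Fin n) : β i = ‖gso b i‖ ^ 2 := dif_pos i.2
  have hβ0 (s : ℕ) : 0 ≤ β s := by simp only [β]; split <;> positivity
  have hmono : MonotoneOn (fun s => 2 ^ s * β s) (Set.Iio n) := fun p hp q hq hpq => by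
    simpa only [β, dif_pos (Set.mem_Iio.mp hp), dif_pos (Set.mem_Iio.mp hq)] using
      hred.monotone_two_pow_mul_norm_gso_sq (show (⟨p, hp⟩ : Fin n) ≤ ⟨q, hq⟩ from hpq)
  simp only [← hβ, Fin.val_castLE, Fin.prod_univ_eq_prod_range β]
  calc (∏ i ∈ range k, β i) ^ j
      ≤ 2 ^ ((k : ℝ) * j * (j - k) / 2) * (∏ i ∈ range j, β i) ^ k :=
        prod_range_pow_le_two_rpow_mul hβ0 (hmono.mono (Set.Iio_subset_Iio hjn)) hkj
    _ ≤ 2 ^ ((k : ℝ) * j * (j - k) / 2) * (2 ^ ((n - j) * j) * ∏ l, β (t l)) ^ k :=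
        mul_le_mul_of_nonneg_left (pow_le_pow_left₀ (prod_nonneg fun i _ => hβ0 i)
          (prod_range_le_two_pow_mul_prod_of_strictMono hβ0 hmono ht) k) (by positivity)
    _ = _ := by
      rw [mul_pow, ← pow_mul, ← Real.rpow_natCast 2, Real.rpow_add two_pos]
      push_cast [Nat.cast_sub hjn]
      ring

end LLL

theorem det_prefix_le_rpow_sublattice_det {m n k j : ℕ} (hk1 : 1 ≤ k) (hkj : k ≤ j)
    (hjn : j ≤ n)
    (b : Fin n → EuclideanSpace ℝ (Fin m))
    (hb : LinearIndependent ℝ b) (hred : LLLReduced b)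
    (d : Fin j → EuclideanSpace ℝ (Fin m))
    (hd : LinearIndependent ℝ d) (hdL : ∀ i, inLattice b (d i)) :
    latticeDet (fun i : Fin k => b (Fin.castLE (hkj.trans hjn) i)) ≤
      2 ^ ((k : ℝ) * ((n : ℝ) - j) / 2 + (k : ℝ) * ((j : ℝ) - k) / 4) *
        latticeDet d ^ ((k : ℝ) / j) := by
  obtain ⟨t, ht, hdet⟩ := exists_strictMono_prod_norm_gramSchmidt_sq_le_det_gram hb hd
    fun i => (inLattice_iff_mem_span b (d i)).mp (hdL i)
  have hkey := (hred.prod_norm_gso_sq_pow_le hkj hjn ht).trans <| mul_le_mul_of_nonneg_left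
    (pow_le_pow_left₀ (prod_nonneg fun _ _ => sq_nonneg _) hdet k) (by positivity)
  rw [latticeDet_eq_sqrt_prod_norm_gso_sq]
  simp only [gso_comp_castLE]
  convert sqrt_le_two_rpow_mul_sqrt_rpow_of_pow_le (prod_nonneg fun _ _ => sq_nonneg _)
    (posSemidef_gram ℝ d).det_nonneg (by omega) hkey using 3
  · have hj : (j : ℝ) ≠ 0 := by norm_cast; omega
    field_simp
    ring
  · rfl
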